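/- arXiv:1111.2236 — 2 statements merged into one kernel-verified Lean document; each statement's English description precedes it below -/
import Mathlib

section
/- A positive integer n is a quadratic residue modulo all but finitely many primes if and only if n is a perfect square. Precisely: if n is a positive integer that is not a perfect square, then there exist infinitely many primes p such that n is a quadratic non-residue of p. -/
/-!
If `n` is not a square, some prime `q` divides it to an odd power, `n = q ^ α * t` with `q ∤ t`.
By the Chinese remainder theorem there is an odd `b ≡ 1 [MOD 4 * t]` with `J(q | b) = -1`:
for odd `q` take `b` a non-residue modulo `q` (quadratic reciprocity applies since
`b ≡ 1 [MOD 4]`), for `q = 2` take `b ≡ 5 [MOD 8]`. On odd numbers `J(a | ·)` only depends on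
the class modulo `4 * a`, so `J(t | b) = J(t | 1)` and `J(n | b) = (-1) ^ α = -1`; moreover every
prime `p ≡ b [MOD 4 * n]` then has `(n | p) = -1`, and there are infinitely many such primes by
Dirichlet's theorem.
-/

open scoped NumberTheorySymbols

namespace Nat

theorem isSquare_of_forall_even_factorization {n : ℕ} (h : ∀ p, Even (n.factorization p)) :
    IsSquare n := by
  rcases eq_or_ne n 0 with rfl | hn
  · exact IsSquare.zero
  refine ⟨n.factorization.prod fun p k => p ^ (k / 2), ?_⟩
  rw [← Finsupp.prod_mul]
  conv_lhs => rw [← prod_factorization_pow_eq_self hn]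
  refine Finsupp.prod_congr fun p _ => ?_
  obtain ⟨m, hm⟩ := h p
  rw [← pow_add, hm]
  congr 1
  omega

theorem exists_prime_odd_factorization_of_not_isSquare {n : ℕ} (hn : ¬IsSquare n) :
    ∃ q, q.Prime ∧ Odd (n.factorization q) := by
  by_contra! h
  refine hn (isSquare_of_forall_even_factorization fun p => ?_)
  by_cases hp : p.Prime
  · exact not_odd_iff_even.mp (h p hp)
  · simp [factorization_eq_zero_of_not_prime n hp]

theorem odd_of_modEq_one_four_mul {b t : ℕ} (h : b ≡ 1 [MOD 4 * t]) : Odd b :=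
  odd_iff.mpr (h.of_dvd (dvd_mul_of_dvd_left (by norm_num) t))

end Nat

namespace jacobiSym

theorem eq_one_of_modEq_one {a b : ℕ} (h : b ≡ 1 [MOD 4 * a]) : J(a | b) = 1 := by
  rw [mod_right' a (Nat.odd_of_modEq_one_four_mul h), h, Nat.one_mod_eq_one.mpr (by omega),
    one_right]

theorem exists_modEq_one_two_eq_neg_one {t : ℕ} (ht : Odd t) :
    ∃ b, b ≡ 1 [MOD 4 * t] ∧ J(2 | b) = -1 := by
  have h2t : Nat.Coprime 2 t := Nat.coprime_two_left.mpr ht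
  obtain ⟨b, hb8, hbt⟩ := Nat.chineseRemainder (h2t.pow_left 3) 5 1
  have hb : b % 8 = 5 := hb8
  have hb4 : b ≡ 1 [MOD 4] := by unfold Nat.ModEq; omega
  refine ⟨b, (Nat.modEq_and_modEq_iff_modEq_mul (h2t.pow_left 2)).mp ⟨hb4, hbt⟩, ?_⟩
  have hb_cast : (b : ZMod 8) = 5 := by
    simpa using (ZMod.natCast_eq_natCast_iff b 5 8).mpr hb8
  rw [at_two (Nat.odd_iff.mpr (by omega)), hb_cast]
  decide

theorem exists_modEq_one_prime_eq_neg_one_of_ne_two {q t : ℕ} (hq : q.Prime) (hq2 : q ≠ 2)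
    (hqt : ¬q ∣ t) : ∃ b, b ≡ 1 [MOD 4 * t] ∧ J(q | b) = -1 := by
  have := Fact.mk hq
  obtain ⟨u, hu⟩ := FiniteField.exists_nonsquare (F := ZMod q)
    (by rwa [ZMod.ringChar_zmod_n])
  have hcop : Nat.Coprime (4 * t) q :=
    ((Nat.coprime_two_left.mpr (hq.odd_of_ne_two hq2)).pow_left 2).mul_left
      ((hq.coprime_iff_not_dvd.mpr hqt).symm)
  obtain ⟨b, hbt, hbq⟩ := Nat.chineseRemainder hcop 1 u.val
  refine ⟨b, hbt, ?_⟩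
  have hb4 : b % 4 = 1 := hbt.of_dvd (dvd_mul_right 4 t)
  rw [← quadratic_reciprocity_one_mod_four hb4 (hq.odd_of_ne_two hq2),
    ← legendreSym.to_jacobiSym, legendreSym.eq_neg_one_iff',
    (ZMod.natCast_eq_natCast_iff _ _ _).mpr hbq, ZMod.natCast_zmod_val]
  exact hu

theorem exists_modEq_one_prime_eq_neg_one {q t : ℕ} (hq : q.Prime) (hqt : ¬q ∣ t) :
    ∃ b, b ≡ 1 [MOD 4 * t] ∧ J(q | b) = -1 := by
  rcases eq_or_ne q 2 with rfl | hq2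
  · exact exists_modEq_one_two_eq_neg_one (Nat.odd_iff.mpr (by omega))
  · exact exists_modEq_one_prime_eq_neg_one_of_ne_two hq hq2 hqt

theorem exists_odd_eq_neg_one_of_not_isSquare {n : ℕ} (hn : ¬IsSquare n) :
    ∃ b, Odd b ∧ J(n | b) = -1 := by
  obtain ⟨q, hq, hodd⟩ := Nat.exists_prime_odd_factorization_of_not_isSquare hn
  have hn0 : n ≠ 0 := by
    rintro rfl
    exact hn IsSquare.zero
  have hnt : n = q ^ n.factorization q * ordCompl[q] n :=
    (Nat.ordProj_mul_ordCompl_eq_self n q).symm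
  set t := ordCompl[q] n
  obtain ⟨b, hbt, hb⟩ := exists_modEq_one_prime_eq_neg_one hq (Nat.not_dvd_ordCompl hq hn0)
  refine ⟨b, Nat.odd_of_modEq_one_four_mul hbt, ?_⟩
  calc J(n | b) = J(q | b) ^ n.factorization q * J(t | b) := by
        rw [← pow_left, ← mul_left, ← Nat.cast_pow, ← Nat.cast_mul, ← hnt]
    _ = -1 := by rw [hb, hodd.neg_one_pow, eq_one_of_modEq_one hbt, mul_one]

theorem infinite_setOf_legendreSym_eq_neg_one {a : ℤ} {b : ℕ} (hb : Odd b) (h : J(a | b) = -1) :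
    {p : ℕ | ∃ _ : Fact p.Prime, p ≠ 2 ∧ legendreSym p a = -1}.Infinite := by
  have : NeZero b := ⟨hb.pos.ne'⟩
  have hab : a.gcd b = 1 := by
    by_contra hne
    have := eq_zero_iff_not_coprime.mpr hne
    rw [h] at this
    norm_num at this
  have ha : a ≠ 0 := by
    rintro rfl
    obtain rfl : b = 1 := by simpa using hab
    simp at h
  have : NeZero (4 * a.natAbs) := ⟨by positivity⟩
  have hcop : Nat.Coprime b (4 * a.natAbs) :=
    ((Nat.coprime_two_left.mpr hb).pow_left 2).symm.mul_right
      (by simpa [Int.gcd_eq_natAbs, Nat.coprime_comm] using hab)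
  refine (Nat.infinite_setOfPred_prime_and_eq_mod ((ZMod.isUnit_iff_coprime b _).mpr hcop)).mono ?_
  rintro p ⟨hp, hpb⟩
  have hpb : p ≡ b [MOD 4 * a.natAbs] := (ZMod.natCast_eq_natCast_iff _ _ _).mp hpb
  have hp_odd : Odd p :=
    have hp2 : p % 2 = b % 2 := hpb.of_dvd (dvd_mul_of_dvd_left (by norm_num) _)
    Nat.odd_iff.mpr (hp2.trans (Nat.odd_iff.mp hb))
  refine ⟨⟨hp⟩, ?_, ?_⟩
  · rintro rfl
    exact (by decide : ¬Odd 2) hp_odd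
  · rw [legendreSym.to_jacobiSym, mod_right a hp_odd, hpb, ← mod_right a hb, h]

end jacobiSym

theorem stmt_4_general (n : ℕ) (hsq : ¬ IsSquare n) :
    {p : ℕ | ∃ _ : Fact (Nat.Prime p), p ≠ 2 ∧ legendreSym p (n : ℤ) = -1}.Infinite := by
  obtain ⟨b, hb, hJ⟩ := jacobiSym.exists_odd_eq_neg_one_of_not_isSquare hsq
  exact jacobiSym.infinite_setOf_legendreSym_eq_neg_one hb hJ

theorem stmt_4 (n : ℕ) (hn : 0 < n) (hsq : ¬ IsSquare n) :
    {p : ℕ | ∃ _ : Fact (Nat.Prime p), p ≠ 2 ∧ legendreSym p (n : ℤ) = -1}.Infinite :=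
  stmt_4_general n hsq
end

section
/- Let k ≥ 2 and let (d_1, …, d_{k-1}) be a (k-1)-tuple of positive integers. Define sequences (a_1, …, a_k) and (b_1, …, b_k) of positive integers inductively by: (a_1, b_1) arbitrary positive integers, and for i ≥ 1, choose t_i ≥ 2 and set a_{i+1} = t_i(a_i + d_i b_i) and b_{i+1} = t_i b_i. Then for all i > j, a_i b_j - a_j b_i = (Σ_{r=j}^{i-1} d_r) · b_i b_j. -/
/-! Each step multiplies the cross difference `a i * b j - a j * b i` by `t i` and adds
`t i * d i * b i * b j`, while `b (i + 1) = t i * b i`; so the quotient of the cross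
difference by `b i * b j` grows by exactly `d i`. -/

section CrossDifference

variable {R : Type*} [CommRing R] {d t a b : ℕ → R}

theorem cross_sub_eq_sum_mul_of_recurrence
    (ha : ∀ i, a (i + 1) = t i * (a i + d i * b i)) (hb : ∀ i, b (i + 1) = t i * b i)
    {i j : ℕ} (hji : j ≤ i) :
    a i * b j - a j * b i = (∑ r ∈ Finset.Ico j i, d r) * (b i * b j) := by
  induction i, hji using Nat.le_induction with
  | base => simp [mul_comm]
  | succ i hji ih =>
    rw [ha i, hb i, Finset.sum_Ico_succ_top hji]
    linear_combination t i * ih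

end CrossDifference

theorem stmt_8_general (k : ℕ) (d t : ℕ → ℤ) (a b : ℕ → ℤ)
    (ha : ∀ i, a (i + 1) = t i * (a i + d i * b i))
    (hb : ∀ i, b (i + 1) = t i * b i) :
    ∀ i j, 1 ≤ j → j < i → i ≤ k →
      a i * b j - a j * b i = (∑ r ∈ Finset.Ico j i, d r) * (b i * b j) :=
  fun _ _ _ hji _ => cross_sub_eq_sum_mul_of_recurrence ha hb hji.le

theorem stmt_8 (k : ℕ) (hk : 2 ≤ k) (d t : ℕ → ℤ) (a b : ℕ → ℤ)
    (hd : ∀ i, 1 ≤ d i) (ht : ∀ i, 2 ≤ t i)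
    (ha1 : 1 ≤ a 1) (hb1 : 1 ≤ b 1)
    (ha : ∀ i, a (i + 1) = t i * (a i + d i * b i))
    (hb : ∀ i, b (i + 1) = t i * b i) :
    ∀ i j, 1 ≤ j → j < i → i ≤ k →
      a i * b j - a j * b i = (∑ r ∈ Finset.Ico j i, d r) * (b i * b j) :=
  stmt_8_general k d t a b ha hb
end
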